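/- Let A₀ = diag(√3·I, (1/√3)·I, 0, -(1/√3)·I, -√3·I) (10×10 block diagonal, blocks 2×2, I the 2×2 identity), A₁ the block anti-diagonal matrix with blocks √3·J, (1/√3)·J, 0, -(1/√3)·J, -√3·J where J = [[0,-1],[-1,0]], and A₂ the block anti-diagonal matrix with blocks √3·I, (1/√3)·I, 0, (1/√3)·I, √3·I. Then for X = Σᵢaᵢeᵢ ∈ ℝ¹⁰, 9|X|² - |A₀X|² - |A₁X|² - |A₂X|² = 8(a₃² + a₄² + a₇² + a₈²) + 9(a₅² + a₆²), which is non-negative. -/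

import Mathlib

open Matrix

noncomputable def B₀ : Matrix (Fin 10) (Fin 10) ℝ :=
  Matrix.diagonal ![Real.sqrt 3, Real.sqrt 3, 1 / Real.sqrt 3, 1 / Real.sqrt 3, 0, 0,
    -(1 / Real.sqrt 3), -(1 / Real.sqrt 3), -Real.sqrt 3, -Real.sqrt 3]

/-- Block anti-diagonal with blocks `√3·J, (1/√3)·J, 0, -(1/√3)·J, -√3·J`, `J = [[0,-1],[-1,0]]`. -/
noncomputable def B₁ : Matrix (Fin 10) (Fin 10) ℝ :=
  !![0,0,0,0,0,0,0,0,0,-Real.sqrt 3;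
     0,0,0,0,0,0,0,0,-Real.sqrt 3,0;
     0,0,0,0,0,0,0,-(1/Real.sqrt 3),0,0;
     0,0,0,0,0,0,-(1/Real.sqrt 3),0,0,0;
     0,0,0,0,0,0,0,0,0,0;
     0,0,0,0,0,0,0,0,0,0;
     0,0,0,1/Real.sqrt 3,0,0,0,0,0,0;
     0,0,1/Real.sqrt 3,0,0,0,0,0,0,0;
     0,Real.sqrt 3,0,0,0,0,0,0,0,0;
     Real.sqrt 3,0,0,0,0,0,0,0,0,0]

/-- Block anti-diagonal with blocks `√3·I, (1/√3)·I, 0, (1/√3)·I, √3·I`. -/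
noncomputable def B₂ : Matrix (Fin 10) (Fin 10) ℝ :=
  !![0,0,0,0,0,0,0,0,Real.sqrt 3,0;
     0,0,0,0,0,0,0,0,0,Real.sqrt 3;
     0,0,0,0,0,0,1/Real.sqrt 3,0,0,0;
     0,0,0,0,0,0,0,1/Real.sqrt 3,0,0;
     0,0,0,0,0,0,0,0,0,0;
     0,0,0,0,0,0,0,0,0,0;
     0,0,1/Real.sqrt 3,0,0,0,0,0,0,0;
     0,0,0,1/Real.sqrt 3,0,0,0,0,0,0;
     Real.sqrt 3,0,0,0,0,0,0,0,0,0;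
     0,Real.sqrt 3,0,0,0,0,0,0,0,0]

/-!
Each `B_α` squares to the same diagonal matrix `diag(3·I, ⅓·I, 0, ⅓·I, 3·I)`, so the three terms
`‖B_α a‖²` coincide, and `9‖a‖² - 3·‖B₀ a‖²` is the diagonal form with weights `0, 8, 9, 8, 0`
on the five coordinate blocks.
-/

/-- The common value of `B_α a ⬝ᵥ B_α a = a ⬝ᵥ B_α² a`. -/
noncomputable def shapeNormSq (a : Fin 10 → ℝ) : ℝ :=
  3 * (a 0 ^ 2 + a 1 ^ 2 + a 8 ^ 2 + a 9 ^ 2) + (a 2 ^ 2 + a 3 ^ 2 + a 6 ^ 2 + a 7 ^ 2) / 3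

lemma sqrt_three_sq : Real.sqrt 3 ^ 2 = 3 := Real.sq_sqrt (by norm_num)

lemma B₀_mulVec_dotProduct_self (a : Fin 10 → ℝ) : B₀ *ᵥ a ⬝ᵥ B₀ *ᵥ a = shapeNormSq a := by
  simp [B₀, shapeNormSq, dotProduct, Fin.sum_univ_succ, mulVec_diagonal]
  ring_nf
  simp only [inv_pow, sqrt_three_sq]
  ring

lemma B₁_mulVec_dotProduct_self (a : Fin 10 → ℝ) : B₁ *ᵥ a ⬝ᵥ B₁ *ᵥ a = shapeNormSq a := by
  simp [B₁, shapeNormSq, dotProduct, Fin.sum_univ_succ, mulVec]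
  ring_nf
  simp only [inv_pow, sqrt_three_sq]
  ring

lemma B₂_mulVec_dotProduct_self (a : Fin 10 → ℝ) : B₂ *ᵥ a ⬝ᵥ B₂ *ᵥ a = shapeNormSq a := by
  simp [B₂, shapeNormSq, dotProduct, Fin.sum_univ_succ, mulVec]
  ring_nf
  simp only [inv_pow, sqrt_three_sq]
  ring

theorem stmt16 (a : Fin 10 → ℝ) :
    9 * (a ⬝ᵥ a) - (B₀.mulVec a ⬝ᵥ B₀.mulVec a) - (B₁.mulVec a ⬝ᵥ B₁.mulVec a)
        - (B₂.mulVec a ⬝ᵥ B₂.mulVec a)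
      = 8 * (a 2 ^ 2 + a 3 ^ 2 + a 6 ^ 2 + a 7 ^ 2) + 9 * (a 4 ^ 2 + a 5 ^ 2) ∧
    0 ≤ 9 * (a ⬝ᵥ a) - (B₀.mulVec a ⬝ᵥ B₀.mulVec a) - (B₁.mulVec a ⬝ᵥ B₁.mulVec a)
        - (B₂.mulVec a ⬝ᵥ B₂.mulVec a) := by
  have ricci_eq : 9 * (a ⬝ᵥ a) - (B₀.mulVec a ⬝ᵥ B₀.mulVec a) - (B₁.mulVec a ⬝ᵥ B₁.mulVec a)
        - (B₂.mulVec a ⬝ᵥ B₂.mulVec a)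
      = 8 * (a 2 ^ 2 + a 3 ^ 2 + a 6 ^ 2 + a 7 ^ 2) + 9 * (a 4 ^ 2 + a 5 ^ 2) := by
    rw [B₀_mulVec_dotProduct_self, B₁_mulVec_dotProduct_self, B₂_mulVec_dotProduct_self]
    simp [shapeNormSq, dotProduct, Fin.sum_univ_succ]
    ring
  exact ⟨ricci_eq, ricci_eq ▸ by positivity⟩
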